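/- arXiv:0710.5874 — 3 statements merged into one kernel-verified Lean document; each statement's English description precedes it below -/
import Mathlib

section
/- Right contraction for δ-separation: for any directed graph G = (V,E) and any subsets A, B, C, D ⊆ V, if C δ-separates A from B in G (A ir_δ B | C) and B ∪ C δ-separates A from D in G (A ir_δ D | B ∪ C), then C δ-separates A from B ∪ D in G (A ir_δ (B ∪ D) | C). -/
/-!
Suppose an offending path runs from `v ∈ A` to `B ∪ D` in `(G^{B∪D}_{An(A∪B∪C∪D)})^m` and cut it
at its first vertex `y` in `B ∪ D`. Let `Z` be the set of vertices reachable from `v` in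
`(G^D_{An(A∪B∪C∪D)})^m` without entering `(B ∪ C) \ D`; the second hypothesis says that `Z` misses
`D`. Every vertex of `Z` lies in `An(A∪B∪C)`: otherwise it is an ancestor of `D`, and walking down
a directed path towards `D` stays in `Z` (each edge is a moral edge not leaving `D`) until it
reaches `D`. So the cut path, together with the common children of its moral edges, lives in
`An(A∪B∪C)`, i.e. it is a path of `(G^B_{An(A∪B∪C)})^m`: if `y ∈ B` this contradicts the first
hypothesis, and if `y ∈ D` the path contradicts the second one.
-/

open Set

variable {V : Type*}

/-- There is a directed path (a sequence of ≥ 2 distinct vertices joined by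
directed edges) from `v` to `w`; i.e. `v` is an ancestor of `w`. -/
def DirPathConn (E : V → V → Prop) (v w : V) : Prop :=
  ∃ l : List V, l.Chain' E ∧ l.Nodup ∧ 2 ≤ l.length ∧
    l.head? = some v ∧ l.getLast? = some w

/-- `an(A)`: vertices outside `A` that are ancestors of some element of `A`. -/
def anSet (E : V → V → Prop) (A : Set V) : Set V :=
  {v | v ∉ A ∧ ∃ a ∈ A, DirPathConn E v a}

/-- `An(A) = A ∪ an(A)`, the smallest ancestral set containing `A`. -/
def AnSet (E : V → V → Prop) (A : Set V) : Set V := A ∪ anSet E A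

/-- `pa(A)`: parents of `A` outside of `A`. -/
def paSet (E : V → V → Prop) (A : Set V) : Set V :=
  {v | v ∉ A ∧ ∃ a ∈ A, E v a}

/-- `cl(A) = A ∪ pa(A)`, the closure of `A`. -/
def clSet (E : V → V → Prop) (A : Set V) : Set V := A ∪ paSet E A

/-- The induced subgraph `G_A` (as an edge relation on `V` supported on `A`). -/
def inducedGraph (E : V → V → Prop) (A : Set V) : V → V → Prop :=
  fun j k => E j k ∧ j ∈ A ∧ k ∈ A

/-- `G^B`: delete from `G` every directed edge starting in `B`. -/
def delOut (E : V → V → Prop) (B : Set V) : V → V → Prop :=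
  fun j k => E j k ∧ j ∉ B

/-- The moral graph `G^m`: distinct `j, k` are adjacent iff they are joined by
an edge in some direction or have a common child. -/
def moralGraph (E : V → V → Prop) : V → V → Prop :=
  fun j k => j ≠ k ∧ (E j k ∨ E k j ∨ ∃ c, E j c ∧ E k c)

/-- `l` is an undirected path from `v` to `w` in the undirected graph `H`:
a sequence of ≥ 2 distinct vertices, consecutive ones adjacent. -/
def IsUPath (H : V → V → Prop) (l : List V) (v w : V) : Prop :=
  l.Chain' H ∧ l.Nodup ∧ 2 ≤ l.length ∧
    l.head? = some v ∧ l.getLast? = some w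

/-- `A ⊥_g B | C` in the undirected graph `H`: every path from a vertex of `A`
to a vertex of `B` contains a vertex of `C`. -/
def uSep (H : V → V → Prop) (A B C : Set V) : Prop :=
  ∀ v ∈ A, ∀ w ∈ B, ∀ l : List V, IsUPath H l v w → ∃ c ∈ C, c ∈ l

/-- δ-separation for pairwise disjoint `A, B, C`: `A ⊥_g B | C` in the moral
graph of the subgraph of `G^B` induced by `An(A ∪ B ∪ C)`. -/
def deltaSepDisjoint (E : V → V → Prop) (A B C : Set V) : Prop :=
  uSep (moralGraph (inducedGraph (delOut E B) (AnSet E (A ∪ B ∪ C)))) A B C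

/-- δ-separation `A ir_δ B | C` for general (not necessarily disjoint) sets:
`C \ B` δ-separates `A \ (B ∪ C)` from `B`. -/
def deltaSep (E : V → V → Prop) (A B C : Set V) : Prop :=
  deltaSepDisjoint E (A \ (B ∪ C)) B (C \ B)

open Relation

abbrev ReachAvoiding (H : V → V → Prop) (K : Set V) : V → V → Prop :=
  ReflTransGen fun x y => H x y ∧ y ∉ K

section Walks

variable {r : V → V → Prop} {a b : V}

theorem exists_nodup_isChain_cons_of_reflTransGen (h : ReflTransGen r a b) :
    ∃ l : List V, (a :: l).IsChain r ∧ (a :: l).Nodup ∧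
      (a :: l).getLast (List.cons_ne_nil a l) = b := by
  induction h using ReflTransGen.head_induction_on with
  | refl => exact ⟨[], .singleton b, List.nodup_singleton b, rfl⟩
  | @head a c hac _ ih =>
    obtain ⟨l, hchain, hnodup, hlast⟩ := ih
    by_cases ha : a ∈ c :: l
    · obtain ⟨s, t, hst⟩ := List.append_of_mem ha
      rw [hst] at hchain hnodup
      refine ⟨t, hchain.right_of_append, hnodup.sublist (List.sublist_append_right _ _), ?_⟩
      simp only [hst, List.getLast_append_of_ne_nil _ (List.cons_ne_nil _ _)] at hlast
      exact hlast
    · exact ⟨c :: l, hchain.cons (by simpa using hac), List.nodup_cons.2 ⟨ha, hnodup⟩,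
        by rwa [List.getLast_cons (List.cons_ne_nil _ _)]⟩

theorem exists_isUPath_of_reflTransGen (h : ReflTransGen r a b) (hab : a ≠ b) :
    ∃ l, IsUPath r l a b := by
  obtain ⟨l, hchain, hnodup, hlast⟩ := exists_nodup_isChain_cons_of_reflTransGen h
  have hl : l ≠ [] := by rintro rfl; exact hab hlast
  refine ⟨a :: l, hchain, hnodup, ?_, rfl,
    by rw [List.getLast?_eq_some_getLast (List.cons_ne_nil _ _), hlast]⟩
  simpa [Nat.one_le_iff_ne_zero] using hl

theorem reflTransGen_of_isChain {l : List V} (hl : l.IsChain r) (ha : l.head? = some a)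
    (hb : l.getLast? = some b) : ReflTransGen r a b := by
  obtain ⟨t, rfl⟩ := List.head?_eq_some_iff.1 ha
  exact List.relationReflTransGen_of_exists_isChain_cons t hl
    (by rwa [List.getLast?_eq_some_getLast (List.cons_ne_nil _ _), Option.some_inj] at hb)

theorem ReachAvoiding.notMem {S : Set V} (h : ReachAvoiding r S a b) (ha : a ∉ S) : b ∉ S := by
  rcases h.cases_tail with rfl | ⟨_, _, -, hb⟩
  exacts [ha, hb]

theorem Relation.ReflTransGen.exists_first_mem {S : Set V} (h : ReflTransGen r a b)
    (ha : a ∉ S) (hb : b ∈ S) : ∃ x y, ReachAvoiding r S a x ∧ x ∉ S ∧ r x y ∧ y ∈ S := by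
  by_contra! hfirst
  have hreach : ∀ z, ReflTransGen r a z → ReachAvoiding r S a z := by
    intro z hz
    induction hz with
    | refl => exact .refl
    | tail _ hcz ih => exact ih.tail ⟨hcz, hfirst _ _ ih (ih.notMem ha) hcz⟩
  exact (hreach b h).notMem ha hb

theorem uSep.not_reachAvoiding {H : V → V → Prop} {A B C : Set V} (hsep : uSep H A B C)
    {v w : V} (hv : v ∈ A) (hw : w ∈ B) (hvC : v ∉ C) (hvw : v ≠ w) :
    ¬ ReachAvoiding H C v w := by
  intro h
  obtain ⟨l, hchain, hnodup, hlen, hhead, hlast⟩ := exists_isUPath_of_reflTransGen h hvw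
  obtain ⟨c, hcC, hcl⟩ :=
    hsep v hv w hw l ⟨hchain.imp fun _ _ => And.left, hnodup, hlen, hhead, hlast⟩
  obtain ⟨t, rfl⟩ := List.head?_eq_some_iff.1 hhead
  exact hchain.induction (· ∉ C) _ (fun _ _ hxy _ => hxy.2) (fun _ => hvC) c hcl hcC

end Walks

section Ancestral

variable {E : V → V → Prop} {S : Set V} {x y : V}

theorem mem_AnSet_iff : x ∈ AnSet E S ↔ ∃ a ∈ S, ReflTransGen E x a := by
  constructor
  · rintro (hx | ⟨-, a, ha, l, hchain, -, -, hhead, hlast⟩)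
    exacts [⟨x, hx, .refl⟩, ⟨a, ha, reflTransGen_of_isChain hchain hhead hlast⟩]
  · rintro ⟨a, ha, hxa⟩
    by_cases hx : x ∈ S
    · exact .inl hx
    · exact .inr ⟨hx, a, ha, exists_isUPath_of_reflTransGen hxa fun h => hx (h ▸ ha)⟩

theorem subset_AnSet : S ⊆ AnSet E S := subset_union_left

theorem mem_AnSet_of_rel (hxy : E x y) (hy : y ∈ AnSet E S) : x ∈ AnSet E S :=
  let ⟨a, ha, hya⟩ := mem_AnSet_iff.1 hy
  mem_AnSet_iff.2 ⟨a, ha, .head hxy hya⟩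

end Ancestral

/-- The moral graph `(G^B_{An(S)})^m` in which δ-separation is tested. -/
abbrev moralAn (E : V → V → Prop) (B S : Set V) : V → V → Prop :=
  moralGraph (inducedGraph (delOut E B) (AnSet E S))

theorem deltaSep_iff {E : V → V → Prop} {A B C : Set V} :
    deltaSep E A B C ↔ uSep (moralAn E B (A ∪ B ∪ C)) (A \ (B ∪ C)) B (C \ B) := by
  rw [deltaSep, deltaSepDisjoint, show A \ (B ∪ C) ∪ B ∪ C \ B = A ∪ B ∪ C by
    ext; simp only [mem_union, mem_sdiff]; tauto]

section MoralGraph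

variable {E : V → V → Prop} {B B' T T' : Set V} {u u' : V}

theorem moralGraph_inducedGraph_mem (h : moralGraph (inducedGraph E T) u u') :
    u ∈ T ∧ u' ∈ T := by
  obtain ⟨-, ⟨-, hu, hu'⟩ | ⟨-, hu', hu⟩ | ⟨-, ⟨-, hu, -⟩, -, hu', -⟩⟩ := h <;> exact ⟨hu, hu'⟩

theorem moralGraph_inducedGraph_delOut_mono (hB : B ⊆ B')
    (h : moralGraph (inducedGraph (delOut E B') T) u u') (hu : u ∈ T') (hu' : u' ∈ T')
    (hchild : ∀ c ∈ T, E u c → u ∉ B' → c ∈ T') :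
    moralGraph (inducedGraph (delOut E B) T') u u' := by
  obtain ⟨hne, ⟨⟨huu', huB⟩, -⟩ | ⟨⟨hu'u, hu'B⟩, -⟩ |
    ⟨c, ⟨⟨huc, huB⟩, -, hcT⟩, ⟨hu'c, hu'B⟩, -⟩⟩ := h
  · exact ⟨hne, .inl ⟨⟨huu', fun h => huB (hB h)⟩, hu, hu'⟩⟩
  · exact ⟨hne, .inr <| .inl ⟨⟨hu'u, fun h => hu'B (hB h)⟩, hu', hu⟩⟩
  · have hcT' := hchild c hcT huc huB
    exact ⟨hne, .inr <| .inr ⟨c, ⟨⟨huc, fun h => huB (hB h)⟩, hu, hcT'⟩,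
      ⟨hu'c, fun h => hu'B (hB h)⟩, hu', hcT'⟩⟩

theorem moralAn_anti {S : Set V} (hB : B ⊆ B') (h : moralAn E B' S u u') : moralAn E B S u u' :=
  let ⟨hu, hu'⟩ := moralGraph_inducedGraph_mem h
  moralGraph_inducedGraph_delOut_mono hB h hu hu' fun _ hc _ _ => hc

theorem ReachAvoiding.tail_of_rel {K : Set V} {v z c : V}
    (hz : ReachAvoiding (moralGraph (inducedGraph (delOut E B) T)) K v z)
    (hzB : z ∉ B) (hzT : z ∈ T) (hzc : E z c) (hcT : c ∈ T) (hcK : c ∉ K) :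
    ReachAvoiding (moralGraph (inducedGraph (delOut E B) T)) K v c := by
  by_cases hzc' : z = c
  · exact hzc' ▸ hz
  · exact hz.tail ⟨⟨hzc', .inl ⟨⟨hzc, hzB⟩, hzT, hcT⟩⟩, hcK⟩

end MoralGraph

section Contraction

variable {E : V → V → Prop} {S K B D : Set V} {v z c u u' : V}

theorem mem_AnSet_of_reachAvoiding (hKS : K ⊆ S)
    (hD : ∀ d ∈ D, ¬ ReachAvoiding (moralAn E D (S ∪ D)) (K \ D) v d)
    (hz : ReachAvoiding (moralAn E D (S ∪ D)) (K \ D) v z)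
    (hzT : z ∈ AnSet E (S ∪ D)) : z ∈ AnSet E S := by
  obtain ⟨a, haS | haD, hza⟩ := mem_AnSet_iff.1 hzT
  · exact mem_AnSet_iff.2 ⟨a, haS, hza⟩
  induction hza using ReflTransGen.head_induction_on with
  | refl => exact absurd hz (hD a haD)
  | @head z z' hzz' hz'a ih =>
    have hz'T : z' ∈ AnSet E (S ∪ D) := mem_AnSet_iff.2 ⟨a, .inr haD, hz'a⟩
    refine mem_AnSet_of_rel hzz' ?_
    by_cases hz'K : z' ∈ K
    · exact subset_AnSet (hKS hz'K)
    · exact ih (hz.tail_of_rel (fun hzD => hD z hzD hz) hzT hzz' hz'T fun h => hz'K h.1) hz'T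

theorem mem_AnSet_of_reachAvoiding_of_rel (hKS : K ⊆ S)
    (hD : ∀ d ∈ D, ¬ ReachAvoiding (moralAn E D (S ∪ D)) (K \ D) v d)
    (hz : ReachAvoiding (moralAn E D (S ∪ D)) (K \ D) v z)
    (hzT : z ∈ AnSet E (S ∪ D)) (hzc : E z c) (hcT : c ∈ AnSet E (S ∪ D)) :
    c ∈ AnSet E S := by
  by_cases hcK : c ∈ K
  · exact subset_AnSet (hKS hcK)
  · exact mem_AnSet_of_reachAvoiding hKS hD
      (hz.tail_of_rel (fun hzD => hD z hzD hz) hzT hzc hcT fun h => hcK h.1) hcT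

theorem moralAn_of_reachAvoiding (hKS : K ⊆ S)
    (hD : ∀ d ∈ D, ¬ ReachAvoiding (moralAn E D (S ∪ D)) (K \ D) v d)
    (hu : ReachAvoiding (moralAn E D (S ∪ D)) (K \ D) v u)
    (huu' : moralAn E (B ∪ D) (S ∪ D) u u') (hu' : u' ∈ AnSet E S) : moralAn E B S u u' :=
  have huT := (moralGraph_inducedGraph_mem huu').1
  moralGraph_inducedGraph_delOut_mono subset_union_left huu'
    (mem_AnSet_of_reachAvoiding hKS hD hu huT) hu'
    fun _ hcT huc _ => mem_AnSet_of_reachAvoiding_of_rel hKS hD hu huT huc hcT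

theorem reachAvoiding_lift {C : Set V} (hBCS : B ∪ C ⊆ S)
    (hD : ∀ d ∈ D, ¬ ReachAvoiding (moralAn E D (S ∪ D)) ((B ∪ C) \ D) v d)
    (hz : ReachAvoiding (moralAn E (B ∪ D) (S ∪ D)) (B ∪ C ∪ D) v z) :
    ReachAvoiding (moralAn E D (S ∪ D)) ((B ∪ C) \ D) v z ∧
      ReachAvoiding (moralAn E B S) (C \ B) v z := by
  induction hz with
  | refl => exact ⟨.refl, .refl⟩
  | tail _ hstep ih =>
    obtain ⟨huu', hu'⟩ := hstep
    have hvu' := ih.1.tail ⟨moralAn_anti subset_union_right huu', fun h => hu' (.inl h.1)⟩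
    refine ⟨hvu', ih.2.tail ⟨moralAn_of_reachAvoiding hBCS hD ih.1 huu' ?_,
      fun h => hu' (.inl (.inr h.1))⟩⟩
    exact mem_AnSet_of_reachAvoiding hBCS hD hvu' (moralGraph_inducedGraph_mem huu').2

end Contraction

theorem deltaSep_right_contraction_general (E : V → V → Prop) (A B C D : Set V)
    (h1 : deltaSep E A B C) (h2 : deltaSep E A D (B ∪ C)) :
    deltaSep E A (B ∪ D) C := by
  rw [deltaSep_iff] at h1 h2 ⊢
  rw [show A ∪ D ∪ (B ∪ C) = A ∪ B ∪ C ∪ D by ext; simp only [mem_union]; tauto] at h2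
  rw [show A ∪ (B ∪ D) ∪ C = A ∪ B ∪ C ∪ D by ext; simp only [mem_union]; tauto]
  rintro v ⟨hvA, hvBDC⟩ w hw l ⟨hchain, -, -, hhead, hlast⟩
  by_contra! havoid
  simp only [mem_union, not_or] at hvBDC
  obtain ⟨⟨hvB, hvD⟩, hvC⟩ := hvBDC
  have hBCS : B ∪ C ⊆ A ∪ B ∪ C := fun x hx => by simp only [mem_union] at hx ⊢; tauto
  have hD : ∀ d ∈ D, ¬ ReachAvoiding (moralAn E D (A ∪ B ∪ C ∪ D)) ((B ∪ C) \ D) v d :=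
    fun d hd => h2.not_reachAvoiding ⟨hvA, by simp only [mem_union]; tauto⟩ hd
      (fun h => h.1.elim hvB hvC) (fun h => hvD (h ▸ hd))
  have hvw : ReachAvoiding (moralAn E (B ∪ D) (A ∪ B ∪ C ∪ D)) (C \ (B ∪ D)) v w :=
    reflTransGen_of_isChain
      (hchain.imp_of_mem_imp fun _ y _ hy hxy => ⟨hxy, fun hyC => havoid y hyC hy⟩) hhead hlast
  have hvBCD : v ∉ B ∪ C ∪ D := by simp only [mem_union]; tauto
  obtain ⟨x, y, hvx, -, ⟨hxy, hyC⟩, hy⟩ :=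
    hvw.exists_first_mem hvBCD (by simp only [mem_union] at hw ⊢; tauto)
  obtain ⟨hvx₂, hvx₁⟩ :=
    reachAvoiding_lift hBCS hD (ReflTransGen.mono (fun _ _ h => ⟨h.1.1, h.2⟩) _ _ hvx)
  have hyBD : y ∈ B ∨ y ∈ D := by simp only [mem_union, mem_sdiff] at hy hyC; tauto
  rcases hyBD with hyB | hyD
  · refine h1.not_reachAvoiding ⟨hvA, by simp only [mem_union]; tauto⟩ hyB (fun h => hvC h.1)
      (fun h => hvB (h ▸ hyB)) (hvx₁.tail ⟨?_, fun h => h.2 hyB⟩)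
    exact moralAn_of_reachAvoiding hBCS hD hvx₂ hxy (subset_AnSet (.inl (.inr hyB)))
  · exact hD y hyD (hvx₂.tail ⟨moralAn_anti subset_union_right hxy, fun h => h.2 hyD⟩)

/-- Right contraction for δ-separation. -/
theorem deltaSep_right_contraction [Fintype V] (E : V → V → Prop)
    (hE : ∀ j k, E j k → j ≠ k) (A B C D : Set V)
    (h1 : deltaSep E A B C) (h2 : deltaSep E A D (B ∪ C)) :
    deltaSep E A (B ∪ D) C :=
  deltaSep_right_contraction_general E A B C D h1 h2
end

section
/- Let H be an undirected graph on a finite vertex set V and let A, B, C ⊆ V be pairwise disjoint with A ⊥_g B | C in H. Then for every vertex γ ∈ V \ (A ∪ B ∪ C), either {γ} ⊥_g B | (A ∪ C) in H or A ⊥_g {γ} | (B ∪ C) in H. -/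
open Set

variable {V : Type*}

/-! A path from `a ∈ A` to `γ` and a path from `γ` to `b ∈ B`, both avoiding `C`, concatenate
to a walk from `a` to `b` avoiding `C`; cutting out its loops leaves a path from `A` to `B`
that misses `C`. -/

namespace List

variable {α : Type*} {R : α → α → Prop}

theorem IsChain.exists_nodup_subset :
    ∀ {l : List α} {a b : α}, l.IsChain R → l.head? = some a → l.getLast? = some b →
      ∃ l' ⊆ l, l'.IsChain R ∧ l'.Nodup ∧ l'.head? = some a ∧ l'.getLast? = some b
  | [], _, _, _, ha, _ => by simp at ha
  | [x], _, _, _, ha, hb => ⟨[x], Subset.refl _, .singleton x, nodup_singleton x, ha, hb⟩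
  | x :: y :: t, a, b, hl, ha, hb => by
    obtain rfl : x = a := by simpa using ha
    obtain ⟨l', hsub, hc, hnd, hy, hb'⟩ :=
      hl.tail.exists_nodup_subset (head?_cons ..) (by rwa [getLast?_cons_cons] at hb)
    by_cases hx : x ∈ l'
    · -- `x` closes a loop: restart `l'` at its occurrence of `x`.
      obtain ⟨s, u, rfl⟩ := append_of_mem hx
      refine ⟨x :: u, fun z hz => ?_, hc.right_of_append, hnd.of_append_right, rfl, ?_⟩
      · exact mem_cons_of_mem _ (hsub (mem_append_right _ hz))
      · rwa [getLast?_append_of_ne_nil _ (cons_ne_nil _ _)] at hb'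
    · refine ⟨x :: l', cons_subset_cons _ hsub, hc.cons ?_, nodup_cons.2 ⟨hx, hnd⟩, rfl, ?_⟩
      · simpa [hy] using hl.rel
      · simp [getLast?_cons, hb']

theorem two_le_length_of_head?_of_getLast? {l : List α} {a b : α} (ha : l.head? = some a)
    (hb : l.getLast? = some b) (hab : a ≠ b) : 2 ≤ l.length := by
  match l, ha, hb with
  | [_], ha, hb => simp_all
  | _ :: _ :: _, _, _ => simp

end List

section

variable {H : V → V → Prop}

theorem exists_isUPath_subset_of_isChain {l : List V} {a b : V} (hl : l.IsChain H)
    (ha : l.head? = some a) (hb : l.getLast? = some b) (hab : a ≠ b) :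
    ∃ l' ⊆ l, IsUPath H l' a b := by
  obtain ⟨l', hsub, hc, hnd, ha', hb'⟩ := hl.exists_nodup_subset ha hb
  exact ⟨l', hsub, hc, hnd, List.two_le_length_of_head?_of_getLast? ha' hb' hab, ha', hb'⟩

theorem IsUPath.exists_isUPath_subset_append {l₁ l₂ : List V} {a c b : V}
    (h₁ : IsUPath H l₁ a c) (h₂ : IsUPath H l₂ c b) (hab : a ≠ b) :
    ∃ l ⊆ l₁ ++ l₂, IsUPath H l a b := by
  obtain ⟨hc₁, -, -, ha, hc⟩ := h₁
  obtain ⟨hc₂, -, -, hc', hb⟩ := h₂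
  obtain ⟨t, rfl⟩ : ∃ t, l₂ = c :: t := by
    cases l₂ with
    | nil => simp at hc'
    | cons x t => exact ⟨t, by simpa using hc'⟩
  have hne : l₁ ≠ [] := by rintro rfl; simp at ha
  have hjoin : (l₁ ++ t).IsChain H :=
    hc₁.append hc₂.tail (by simpa [hc] using (List.isChain_cons.1 hc₂).1)
  have hb' : (l₁ ++ t).getLast? = some b := by
    cases t with
    | nil => simpa [hc] using hb
    | cons y t => simpa [List.getLast?_append_of_ne_nil] using hb
  obtain ⟨l, hsub, hl⟩ := exists_isUPath_subset_of_isChain hjoin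
    (by rwa [List.head?_append_of_ne_nil _ hne]) hb' hab
  exact ⟨l, fun z hz => ((List.sublist_cons_self c t).append_left l₁).subset (hsub hz), hl⟩

end

theorem uSep_vertex_dichotomy_general (H : V → V → Prop)
    (A B C : Set V)
    (hAB : Disjoint A B)
    (h : uSep H A B C) (γ : V) :
    uSep H {γ} B (A ∪ C) ∨ uSep H A {γ} (B ∪ C) := by
  by_contra! hcon
  simp only [uSep, not_forall, Set.mem_singleton_iff, not_exists, not_and] at hcon
  obtain ⟨⟨_, rfl, b, hb, l₂, hl₂, hl₂C⟩, ⟨a, ha, _, rfl, l₁, hl₁, hl₁C⟩⟩ := hcon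
  obtain ⟨l, hsub, hl⟩ := hl₁.exists_isUPath_subset_append hl₂ (hAB.ne_of_mem ha hb)
  obtain ⟨c, hcC, hcl⟩ := h a ha b hb l hl
  rcases List.mem_append.1 (hsub hcl) with hc | hc
  · exact hl₁C c (Or.inr hcC) hc
  · exact hl₂C c (Or.inr hcC) hc

/-- In an undirected graph, if `C` separates `A` from `B` then any vertex `γ`
outside `A ∪ B ∪ C` is separated from `B` by `A ∪ C` or from `A` by `B ∪ C`. -/
theorem uSep_vertex_dichotomy [Fintype V] (H : V → V → Prop)
    (hSymm : ∀ j k, H j k → H k j) (hIrr : ∀ j, ¬ H j j)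
    (A B C : Set V)
    (hAB : Disjoint A B) (hAC : Disjoint A C) (hBC : Disjoint B C)
    (h : uSep H A B C) (γ : V) (hγ : γ ∈ Set.univ \ (A ∪ B ∪ C)) :
    uSep H {γ} B (A ∪ C) ∨ uSep H A {γ} (B ∪ C) :=
  uSep_vertex_dichotomy_general H A B C hAB h γ
end

section
/- Let G = (V,E) be a directed graph, let A, B, C ⊆ V be pairwise disjoint, and let γ ∈ an(A ∪ B ∪ C) \ (A ∪ B ∪ C). Suppose that in the undirected graph (G^B_{An(A∪B∪C)})^m both A ⊥_g B | C and A ⊥_g {γ} | (B ∪ C) hold. Then for every k ∈ C, either A ir_δ {k} | ((C \ {k}) ∪ B ∪ {γ}) or {γ} ir_δ {k} | ((C \ {k}) ∪ B ∪ A) holds in G. -/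
open Set

variable {V : Type*}

/-! If both separations fail, there are paths `a ⋯ k` with `a ∈ A` and `γ ⋯ k` in the moral graph
of `G^{k}` restricted to `An(A ∪ B ∪ C ∪ {γ}) = An(A ∪ B ∪ C)`, avoiding the other conditioning
vertices, in particular `B ∪ C`. As `k` is a sink of `G^{k}`, each path enters `k` from a parent
of `k`, and away from `k` and `B` the two moral graphs agree. The two parents of `k` are equal or
married in `(G^B_{An(A ∪ B ∪ C)})^m`, so the paths join into a walk from `a` to `γ` avoiding
`B ∪ C`, contradicting `A ⊥_g {γ} | (B ∪ C)`. -/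

open List Relation

def IsWalk (R : V → V → Prop) (l : List V) (v w : V) : Prop :=
  l.IsChain R ∧ l.head? = some v ∧ l.getLast? = some w

theorem IsUPath.isWalk {R : V → V → Prop} {l : List V} {v w : V} (h : IsUPath R l v w) :
    IsWalk R l v w :=
  ⟨h.1, h.2.2.2⟩

namespace IsWalk

variable {R R' : V → V → Prop} {l l' : List V} {u v w x : V}

theorem mono (h : ∀ x y, R x y → R' x y) (hl : IsWalk R l v w) : IsWalk R' l v w :=
  ⟨hl.1.imp h, hl.2⟩

theorem append (hl : IsWalk R l v u) (hl' : IsWalk R l' w x) (huw : R u w) :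
    IsWalk R (l ++ l') v x := by
  obtain ⟨hc, hh, hlast⟩ := hl
  obtain ⟨hc', hh', hlast'⟩ := hl'
  have hne : l ≠ [] := by rintro rfl; simp at hh
  have hne' : l' ≠ [] := by rintro rfl; simp at hh'
  refine ⟨hc.append hc' ?_, by rw [head?_append_of_ne_nil _ hne, hh],
    by rw [getLast?_append_of_ne_nil _ hne', hlast']⟩
  simpa [hlast, hh'] using huw

theorem reverse (hR : ∀ ⦃x y⦄, R x y → R y x) (hl : IsWalk R l v w) : IsWalk R l.reverse w v :=
  ⟨isChain_reverse.2 (hl.1.imp fun _ _ h => hR h), by rw [head?_reverse, hl.2.2],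
    by rw [getLast?_reverse, hl.2.1]⟩

/-- Loop erasure: a walk that may stutter contains a duplicate-free walk between its ends. -/
theorem exists_nodup_subset (hl : IsWalk (ReflGen R) l v w) :
    ∃ l', IsWalk R l' v w ∧ l'.Nodup ∧ l' ⊆ l := by
  induction l generalizing v with
  | nil => simp [IsWalk] at hl
  | cons x t ih =>
    obtain ⟨hc, hh, hlast⟩ := hl
    obtain rfl : x = v := by simpa using hh
    rcases t with _ | ⟨y, t⟩
    · exact ⟨[x], ⟨isChain_singleton _, rfl, hlast⟩, nodup_singleton _, List.Subset.refl _⟩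
    obtain ⟨l', ⟨hc', hh', hlast'⟩, hnd', hsub'⟩ :=
      ih ⟨hc.tail, rfl, by rwa [getLast?_cons_cons] at hlast⟩
    by_cases hx : x ∈ l'
    · obtain ⟨s, r, rfl⟩ := append_of_mem hx
      refine ⟨x :: r, ⟨hc'.suffix (suffix_append _ _), rfl, ?_⟩,
        hnd'.sublist (sublist_append_right _ _),
        fun z hz => subset_cons_self _ _ (hsub' (mem_append_right _ hz))⟩
      rwa [getLast?_append_of_ne_nil _ (cons_ne_nil _ _)] at hlast'
    · have hxy : R x y := by
        rcases (isChain_cons_cons.1 hc).1 with _ | hxy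
        · exact absurd (mem_of_mem_head? hh') hx
        · exact hxy
      refine ⟨x :: l', ⟨isChain_cons.2 ⟨fun z hz => ?_, hc'⟩, rfl, ?_⟩, nodup_cons.2 ⟨hx, hnd'⟩,
        cons_subset_cons _ hsub'⟩
      · obtain rfl : y = z := by simpa [hh'] using hz
        exact hxy
      · simp [getLast?_cons, hlast']

theorem exists_isUPath_subset (hl : IsWalk (ReflGen R) l v w) (hvw : v ≠ w) :
    ∃ l', IsUPath R l' v w ∧ l' ⊆ l := by
  obtain ⟨l', ⟨hc, hh, hlast⟩, hnd, hsub⟩ := hl.exists_nodup_subset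
  refine ⟨l', ⟨hc, hnd, ?_, hh, hlast⟩, hsub⟩
  rcases l' with _ | ⟨a, _ | ⟨b, t⟩⟩
  · simp at hh
  · simp_all
  · simp

end IsWalk

theorem uSep.exists_mem_of_isWalk {H : V → V → Prop} {A B C : Set V} {l : List V} {v w : V}
    (h : uSep H A B C) (hv : v ∈ A) (hw : w ∈ B) (hvw : v ≠ w)
    (hl : IsWalk (ReflGen H) l v w) : ∃ c ∈ C, c ∈ l := by
  obtain ⟨l', hl', hsub⟩ := hl.exists_isUPath_subset hvw
  obtain ⟨c, hc, hcl⟩ := h v hv w hw l' hl'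
  exact ⟨c, hc, hsub hcl⟩

theorem DirPathConn.trans {E : V → V → Prop} {u v w : V} (huv : DirPathConn E u v)
    (hvw : DirPathConn E v w) (huw : u ≠ w) : DirPathConn E u w := by
  obtain ⟨l, hl⟩ := huv
  obtain ⟨l', hl'⟩ := hvw
  have hwalk : IsWalk (ReflGen E) (l ++ l') u w :=
    ((IsUPath.isWalk hl).mono fun _ _ => ReflGen.single).append
      ((IsUPath.isWalk hl').mono fun _ _ => ReflGen.single) ReflGen.refl
  obtain ⟨l'', hl'', -⟩ := hwalk.exists_isUPath_subset huw
  exact ⟨l'', hl''⟩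

theorem AnSet_subset_of_subset_AnSet {E : V → V → Prop} {S T : Set V} (h : T ⊆ AnSet E S) :
    AnSet E T ⊆ AnSet E S := by
  rintro x (hx | ⟨-, t, ht, hxt⟩)
  · exact h hx
  by_cases hxS : x ∈ S
  · exact Or.inl hxS
  rcases h ht with htS | ⟨-, s, hs, hts⟩
  · exact Or.inr ⟨hxS, t, htS, hxt⟩
  · exact Or.inr ⟨hxS, s, hs, hxt.trans hts fun hxs => hxS (hxs ▸ hs)⟩

section moralGraph

variable {E E' : V → V → Prop} {u v : V}

theorem moralGraph_symm (huv : moralGraph E u v) : moralGraph E v u := by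
  obtain ⟨hne, h | h | ⟨c, hu, hv⟩⟩ := huv
  exacts [⟨hne.symm, Or.inr (Or.inl h)⟩, ⟨hne.symm, Or.inl h⟩,
    ⟨hne.symm, Or.inr (Or.inr ⟨c, hv, hu⟩)⟩]

theorem moralGraph_of_forall_rel_imp {P : Set V} (h : ∀ x ∈ P, ∀ y, E x y → E' x y)
    (hu : u ∈ P) (hv : v ∈ P) (huv : moralGraph E u v) : moralGraph E' u v := by
  obtain ⟨hne, h' | h' | ⟨c, huc, hvc⟩⟩ := huv
  exacts [⟨hne, Or.inl (h u hu v h')⟩, ⟨hne, Or.inr (Or.inl (h v hv u h'))⟩,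
    ⟨hne, Or.inr (Or.inr ⟨c, h u hu c huc, h v hv c hvc⟩)⟩]

theorem rel_of_moralGraph_of_forall_not_rel (hv : ∀ y, ¬ E v y) (h : moralGraph E u v) :
    E u v := by
  obtain ⟨-, h' | h' | ⟨c, -, hvc⟩⟩ := h
  exacts [h', (hv u h').elim, (hv c hvc).elim]

theorem reflGen_moralGraph_of_common_child {c : V} (hu : E u c) (hv : E v c) :
    ReflGen (moralGraph E) u v := by
  by_cases huv : u = v
  · exact huv ▸ ReflGen.refl
  · exact ReflGen.single ⟨huv, Or.inr (Or.inr ⟨c, hu, hv⟩)⟩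

end moralGraph

theorem exists_isWalk_to_parent_of_not_deltaSep {E : V → V → Prop} {X Z B S : Set V} {k : V}
    (h : ¬ deltaSep E X {k} Z) (hS : X ∪ {k} ∪ Z ⊆ AnSet E S) (hB : B ⊆ insert k Z) :
    ∃ x ∈ X \ ({k} ∪ Z), ∃ l u,
      IsWalk (moralGraph (inducedGraph (delOut E B) (AnSet E S))) l x u ∧
      inducedGraph (delOut E B) (AnSet E S) u k ∧ ∀ y ∈ l, y ∉ insert k Z := by
  simp only [deltaSep, deltaSepDisjoint, uSep, not_forall, exists_prop] at h
  obtain ⟨x, hx, w, hw, p, ⟨hc, hnd, hlen, hh, hlast⟩, hpZ⟩ := h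
  obtain rfl : k = w := hw.symm
  have hT : AnSet E (X \ ({k} ∪ Z) ∪ {k} ∪ Z \ {k}) ⊆ AnSet E S :=
    AnSet_subset_of_subset_AnSet
      ((union_subset_union (union_subset_union_left _ sdiff_subset) sdiff_subset).trans hS)
  obtain ⟨p₀, rfl⟩ : ∃ p₀, p = p₀ ++ [k] := ⟨p.dropLast, (dropLast_append_getLast? k hlast).symm⟩
  obtain ⟨hc₀, -, hjoin⟩ := isChain_append.1 hc
  have hp₀ : p₀ ≠ [] := by rintro rfl; simp at hlen
  obtain ⟨u, hu⟩ : ∃ u, p₀.getLast? = some u := ⟨_, getLast?_eq_some_getLast hp₀⟩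
  have hp₀Z : ∀ y ∈ p₀, y ∉ insert k Z := by
    rintro y hy (rfl | hyZ)
    · exact (nodup_append.1 hnd).2.2 y hy y (mem_singleton_self _) rfl
    · exact hpZ ⟨y, by simp [hy, hyZ, (nodup_append.1 hnd).2.2 y hy k (mem_singleton_self _)]⟩
  have hout : ∀ y ∈ (insert k Z)ᶜ, ∀ z,
      inducedGraph (delOut E {k}) (AnSet E (X \ ({k} ∪ Z) ∪ {k} ∪ Z \ {k})) y z →
      inducedGraph (delOut E B) (AnSet E S) y z :=
    fun y hy z ⟨⟨hyz, _⟩, hyT, hzT⟩ => ⟨⟨hyz, fun hyB => hy (hB hyB)⟩, hT hyT, hT hzT⟩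
  have hwalk : IsWalk (moralGraph (inducedGraph (delOut E B) (AnSet E S))) p₀ x u :=
    ⟨hc₀.imp_of_mem_imp fun y z hy hz => moralGraph_of_forall_rel_imp hout (hp₀Z y hy) (hp₀Z z hz),
      by rwa [head?_append_of_ne_nil _ hp₀] at hh, hu⟩
  exact ⟨x, hx, p₀, u, hwalk, hout u (hp₀Z u (mem_of_getLast? hu)) k
    (rel_of_moralGraph_of_forall_not_rel (fun _ h => h.1.2 rfl) (hjoin u hu k rfl)), hp₀Z⟩

theorem deltaSep_separator_dichotomy_general (E : V → V → Prop) (A B C : Set V)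
    (γ : V) (hγ : γ ∈ anSet E (A ∪ B ∪ C) \ (A ∪ B ∪ C))
    (h2 : uSep (moralGraph (inducedGraph (delOut E B) (AnSet E (A ∪ B ∪ C))))
      A {γ} (B ∪ C)) :
    ∀ k ∈ C,
      deltaSep E A {k} ((C \ {k}) ∪ B ∪ {γ}) ∨
      deltaSep E {γ} {k} ((C \ {k}) ∪ B ∪ A) := by
  intro k hk
  by_contra! ⟨hsepA, hsepγ⟩
  have hS : insert γ (A ∪ B ∪ C) ⊆ AnSet E (A ∪ B ∪ C) :=
    insert_subset (Or.inr hγ.1) subset_union_left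
  have hcut : ∀ Y, B ∪ C ⊆ insert k (C \ {k} ∪ B ∪ Y) := fun Y x hx => by
    rcases eq_or_ne x k with rfl | hxk <;> aesop
  obtain ⟨a, ha, p, u, hp, hu, hpBC⟩ := exists_isWalk_to_parent_of_not_deltaSep hsepA
    (subset_trans (fun x _ => by aesop) hS) (subset_union_left.trans (hcut _))
  obtain ⟨g, ⟨rfl, -⟩, q, w, hq, hw, hqBC⟩ := exists_isWalk_to_parent_of_not_deltaSep hsepγ
    (subset_trans (fun x _ => by aesop) hS) (subset_union_left.trans (hcut _))
  have hW := (hp.mono fun _ _ => ReflGen.single).append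
    ((hq.reverse fun _ _ => moralGraph_symm).mono fun _ _ => ReflGen.single)
    (reflGen_moralGraph_of_common_child hu hw)
  obtain ⟨c, hc, hcW⟩ := h2.exists_mem_of_isWalk ha.1 rfl (fun h => ha.2 (by simp [h])) hW
  rcases mem_append.1 hcW with hcp | hcq
  · exact hpBC c hcp (hcut _ hc)
  · exact hqBC c (mem_reverse.1 hcq) (hcut _ hc)

/-- If `γ ∈ an(A ∪ B ∪ C) \ (A ∪ B ∪ C)` and, in `(G^B_{An(A ∪ B ∪ C)})^m`,
both `A ⊥_g B | C` and `A ⊥_g {γ} | (B ∪ C)` hold, then every `k ∈ C`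
satisfies `A ir_δ {k} | ((C \ {k}) ∪ B ∪ {γ})` or
`{γ} ir_δ {k} | ((C \ {k}) ∪ B ∪ A)`. -/
theorem deltaSep_separator_dichotomy [Fintype V] (E : V → V → Prop)
    (hE : ∀ j k, E j k → j ≠ k) (A B C : Set V)
    (hAB : Disjoint A B) (hAC : Disjoint A C) (hBC : Disjoint B C)
    (γ : V) (hγ : γ ∈ anSet E (A ∪ B ∪ C) \ (A ∪ B ∪ C))
    (h1 : uSep (moralGraph (inducedGraph (delOut E B) (AnSet E (A ∪ B ∪ C))))
      A B C)
    (h2 : uSep (moralGraph (inducedGraph (delOut E B) (AnSet E (A ∪ B ∪ C))))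
      A {γ} (B ∪ C)) :
    ∀ k ∈ C,
      deltaSep E A {k} ((C \ {k}) ∪ B ∪ {γ}) ∨
      deltaSep E {γ} {k} ((C \ {k}) ∪ B ∪ A) :=
  deltaSep_separator_dichotomy_general E A B C γ hγ h2
end
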